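/- arXiv:1512.00115 — 4 statements merged into one kernel-verified Lean document; each statement's English description precedes it below -/
import Mathlib

section
/- Let A be the 3×2 matrix with rows (1,0), (0,1), (α, 1-α) where α ∈ [0,1] and α ≠ 1/2. Then for any x, x' ∈ R^2 and any 3×3 permutation matrix Π, if Ax = Π A x' then x = x'. -/
open Matrix

/-!
Since `α ∈ [0, 1]`, the third entry `α x₁ + (1 - α) x₂` of `A x` lies between the first two, so it is
the median of the entries, and the median (like the sum) only depends on the multiset of entries.
Hence `A x` and `A x'` have the same third entry and the same entry sum, and these two linear forms
determine `x` because the system has determinant `1 - 2α ≠ 0`.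
-/

noncomputable def median3 (u : Fin 3 → ℝ) : ℝ := ∑ i, u i - (⨆ i, u i) - ⨅ i, u i

theorem median3_comp_perm (u : Fin 3 → ℝ) (σ : Equiv.Perm (Fin 3)) :
    median3 (u ∘ σ) = median3 u := by
  simp only [median3, Function.comp_apply, Equiv.sum_comp, Equiv.iSup_comp, Equiv.iInf_comp]

theorem median3_eq_of_mem_uIcc {u : Fin 3 → ℝ} (h : u 2 ∈ Set.uIcc (u 0) (u 1)) :
    median3 u = u 2 := by
  have hsup : ⨆ i, u i = max (u 0) (max (u 1) (u 2)) := by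
    rw [← Finset.sup'_univ_eq_ciSup]; simp [Fin.univ_succ]
  have hinf : ⨅ i, u i = min (u 0) (min (u 1) (u 2)) := by
    rw [← Finset.inf'_univ_eq_ciInf]; simp [Fin.univ_succ]
  rw [median3, hsup, hinf, Fin.sum_univ_three]
  rcases Set.mem_uIcc.1 h with ⟨h0, h2⟩ | ⟨h2, h0⟩
  · rw [max_eq_left h2, max_eq_right (h0.trans h2), min_eq_right h2, min_eq_left h0]; ring
  · rw [max_eq_right h2, max_eq_left h0, min_eq_left h2, min_eq_right (h2.trans h0)]; ring

theorem convex_combo_mem_uIcc {α : ℝ} (hα : α ∈ Set.Icc (0 : ℝ) 1) (a b : ℝ) :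
    α * a + (1 - α) * b ∈ Set.uIcc a b := by
  rw [← segment_eq_uIcc]
  exact ⟨α, 1 - α, hα.1, sub_nonneg.2 hα.2, by ring, rfl⟩

theorem eq_of_add_eq_of_convex_combo_eq {α a b a' b' : ℝ} (hne : α ≠ 1 / 2)
    (hs : a + b = a' + b') (hc : α * a + (1 - α) * b = α * a' + (1 - α) * b') :
    a = a' ∧ b = b' := by
  have hprod : (2 * α - 1) * (a - a') = 0 := by linear_combination hc - (1 - α) * hs
  have ha : a = a' :=
    sub_eq_zero.1 <| (mul_eq_zero.1 hprod).resolve_left fun h ↦ hne (by linarith)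
  exact ⟨ha, by linarith⟩

theorem eq_of_vec_eq_comp_perm {α a b a' b' : ℝ} (hα : α ∈ Set.Icc (0 : ℝ) 1) (hne : α ≠ 1 / 2)
    (σ : Equiv.Perm (Fin 3))
    (h : ![a, b, α * a + (1 - α) * b] = ![a', b', α * a' + (1 - α) * b'] ∘ σ) :
    a = a' ∧ b = b' := by
  have hmedian : α * a + (1 - α) * b = α * a' + (1 - α) * b' :=
    calc α * a + (1 - α) * b = median3 ![a, b, α * a + (1 - α) * b] :=
          (median3_eq_of_mem_uIcc (u := ![a, b, _]) (convex_combo_mem_uIcc hα a b)).symm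
      _ = median3 (![a', b', α * a' + (1 - α) * b'] ∘ σ) := by rw [h]
      _ = median3 ![a', b', α * a' + (1 - α) * b'] := median3_comp_perm _ σ
      _ = α * a' + (1 - α) * b' := median3_eq_of_mem_uIcc (convex_combo_mem_uIcc hα a' b')
  have hsum : ∑ i, ![a, b, α * a + (1 - α) * b] i = ∑ i, ![a', b', α * a' + (1 - α) * b'] i := by
    rw [h, Function.comp_def, Equiv.sum_comp]
  simp only [Fin.sum_univ_three, Matrix.cons_val] at hsum
  exact eq_of_add_eq_of_convex_combo_eq hne (by linarith) hmedian

theorem mulVec_mixing (α : ℝ) (x : Fin 2 → ℝ) :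
    (!![1, 0; 0, 1; α, 1 - α] : Matrix (Fin 3) (Fin 2) ℝ) *ᵥ x
      = ![x 0, x 1, α * x 0 + (1 - α) * x 1] := by
  ext i; fin_cases i <;> simp [mulVec, dotProduct, Fin.sum_univ_two]

/-- For the 3×2 matrix with rows (1,0), (0,1), (α, 1-α) with α ∈ [0,1], α ≠ 1/2,
the signal `x` is uniquely determined by the unlabeled entries of `A x`: if
`A x = Π (A x')` for some permutation matrix `Π`, then `x = x'`. -/
theorem stmt5 (α : ℝ) (hα : α ∈ Set.Icc (0 : ℝ) 1) (hne : α ≠ 1 / 2)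
    (x x' : Fin 2 → ℝ) (σ : Equiv.Perm (Fin 3))
    (h : (!![1, 0; 0, 1; α, 1 - α] : Matrix (Fin 3) (Fin 2) ℝ).mulVec x
        = (σ.permMatrix ℝ).mulVec
            ((!![1, 0; 0, 1; α, 1 - α] : Matrix (Fin 3) (Fin 2) ℝ).mulVec x')) :
    x = x' := by
  rw [permMatrix_mulVec, mulVec_mixing, mulVec_mixing] at h
  obtain ⟨h0, h1⟩ := eq_of_vec_eq_comp_perm hα hne σ h
  ext i
  fin_cases i
  exacts [h0, h1]
end

section
/- There exists, for every K ≥ 1, a deterministic 2K×K real matrix A such that for all x, x' ∈ R^K and all 2K×2K permutation matrices Π, A x = Π A x' implies x = x'. -/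
/-!
For a fixed permutation `σ`, with permutation matrix `Π`, unique recovery under `σ` follows from
the nonvanishing of a determinant that is a polynomial `G_σ` in the entries of `A`. There are
finitely many `σ`, so a real point where no `G_σ` vanishes gives the matrix.

If `σ` has at least `K` cycles, let `W` be the indicator matrix of `K` distinct cycles. Its columns
are `Π`-invariant, so `Ax = ΠAx'` gives `WᵀAx = WᵀAx'`, and `G_σ = det (WᵀA)`.

If `σ` has at most `K` cycles, `[A | A - ΠA]` maps `(x - x', x')` to `Ax - ΠAx'`, and `G_σ` is its
determinant. Over `ℂ`, `Π` is diagonalizable because `Π ^ orderOf σ = 1`. An eigenvector is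
determined by its values on one point of each cycle, so every eigenspace has dimension at most
`K`. Hence an eigenbasis splits into `K` pairs `(b, b')` with distinct eigenvalues `λ ≠ λ'`. The
matrix whose columns are the sums `b + b'` gives `G_σ ≠ 0`: on each pair, `[A | A - ΠA]` acts as
`[[1, 1 - λ], [1, 1 - λ']]`, whose determinant is `λ - λ'`.
-/

open Matrix Module

theorem MvPolynomial.exists_forall_eval_ne_zero {ι σ R : Type*} [Fintype ι] [CommRing R]
    [IsDomain R] [Infinite R] {p : ι → MvPolynomial σ R} (hp : ∀ i, p i ≠ 0) :
    ∃ x, ∀ i, eval x (p i) ≠ 0 := by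
  classical
  have hprod : ∏ i, p i ≠ 0 := Finset.prod_ne_zero_iff.mpr fun i _ => hp i
  by_contra! h
  refine hprod (MvPolynomial.funext fun x => ?_)
  obtain ⟨i, hi⟩ := h x
  rw [map_prod, map_zero]
  exact Finset.prod_eq_zero (Finset.mem_univ i) hi

theorem Module.End.IsSemisimple.exists_eigenbasis {K V : Type*} [Field K] [IsAlgClosed K]
    [AddCommGroup V] [Module K V] [FiniteDimensional K V] {f : End K V} (hf : f.IsSemisimple) :
    ∃ b : Basis (Σ μ : K, Fin (finrank K (f.eigenspace μ))) K V, ∀ i, f (b i) = i.1 • b i := by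
  classical
  have hint := DirectSum.isInternal_submodule_of_iSupIndep_of_iSup_eq_top
    f.eigenspaces_iSupIndep hf.iSup_eigenspace_eq_top
  exact ⟨hint.collectedBasis fun μ => finBasis K (f.eigenspace μ),
    fun i => mem_eigenspace_iff.mp (hint.collectedBasis_mem _ i)⟩

theorem exists_sumEquiv_apply_inl_ne_apply_inr {ι n β : Type*} [Finite ι] [Finite n] (f : ι → β)
    (hcard : Nat.card ι = Nat.card n + Nat.card n)
    (hfiber : ∀ b, Nat.card {i // f i = b} ≤ Nat.card n) :
    ∃ e : n ⊕ n ≃ ι, ∀ j, f (e (.inl j)) ≠ f (e (.inr j)) := by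
  let _ : LinearOrder β := IsWellOrder.linearOrder WellOrderingRel
  set N := Nat.card n
  let eι : ι ≃ Fin (N + N) := Finite.equivFinOfCardEq hcard
  let g : Fin (N + N) → β := f ∘ eι.symm
  let π := Tuple.sort g
  refine ⟨(Equiv.sumCongr (Finite.equivFin n) (Finite.equivFin n)).trans
    (finSumFinEquiv.trans (π.trans eι.symm)), fun j hj => ?_⟩
  set k := Finite.equivFin n j
  -- `g ∘ π` is sorted, so it is constant on the `N + 1` positions from `k` to `N + k`.
  have hconst : ∀ t : Fin (N + 1), g (π ⟨k + t, by omega⟩) = g (π (Fin.castAdd N k)) := by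
    intro t
    refine le_antisymm ?_ (Tuple.monotone_sort g (Fin.mk_le_mk.mpr (by simp)))
    refine (Tuple.monotone_sort g (Fin.mk_le_mk.mpr ?_)).trans_eq (?_ : g (π (Fin.natAdd N k)) = _)
    · have := t.isLt; omega
    · exact hj.symm
  have hinj : Function.Injective fun t : Fin (N + 1) =>
      (⟨eι.symm (π ⟨k + t, by omega⟩), hconst t⟩ : {i // f i = g (π (Fin.castAdd N k))}) := by
    intro t t' h
    have := π.injective (eι.symm.injective (congr_arg Subtype.val h))
    ext; simpa using this
  have := Nat.card_le_card_of_injective _ hinj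
  simp only [Nat.card_eq_fintype_card, Fintype.card_fin] at this
  linarith [hfiber (g (π (Fin.castAdd N k)))]

theorem det_submatrix_ne_zero_iff_mulVec_injective {m k R : Type*} [Fintype k] [DecidableEq k]
    [Field R] (M : Matrix m k R) (e : k ≃ m) :
    (M.submatrix e id).det ≠ 0 ↔ Function.Injective M.mulVec := by
  rw [← isUnit_iff_ne_zero, ← isUnit_iff_isUnit_det, ← mulVec_injective_iff_isUnit]
  exact e.surjective.injective_comp_right.of_comp_iff M.mulVec

namespace Equiv.Perm

variable {α : Type*}

theorem funLeft_pow (K : Type*) [CommSemiring K] (σ : Perm α) (k : ℕ) :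
    LinearMap.funLeft K K σ ^ k = LinearMap.funLeft K K ⇑(σ ^ k) := by
  induction k with
  | zero => rfl
  | succ k ih => rw [pow_succ, ih, pow_succ', coe_mul, LinearMap.funLeft_comp]; rfl

theorem isSemisimple_funLeft [Fintype α] (K : Type*) [Field K] [CharZero K] (σ : Perm α) :
    Module.End.IsSemisimple (LinearMap.funLeft K K σ) := by
  have hsep : (Polynomial.X ^ orderOf σ - Polynomial.C (1 : K)).Separable :=
    Polynomial.separable_X_pow_sub_C 1 (by exact_mod_cast (orderOf_pos σ).ne') one_ne_zero
  refine Module.End.isSemisimple_of_squarefree_aeval_eq_zero hsep.squarefree ?_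
  rw [map_sub, map_pow, Polynomial.aeval_X, Polynomial.aeval_C, funLeft_pow, pow_orderOf_eq_one,
    map_one, sub_eq_zero]
  rfl

theorem finrank_eigenspace_funLeft_le [Fintype α] (K : Type*) [Field K] (σ : Perm α) (μ : K) :
    finrank K (Module.End.eigenspace (LinearMap.funLeft K K σ) μ) ≤
      Nat.card (Quotient (SameCycle.setoid σ)) := by
  classical
  let restrict : Module.End.eigenspace (LinearMap.funLeft K K σ) μ →ₗ[K]
      (Quotient (SameCycle.setoid σ) → K) :=
    (LinearMap.funLeft K K Quotient.out).comp (Submodule.subtype _)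
  have hinj : Function.Injective restrict := by
    rw [← LinearMap.ker_eq_bot, Submodule.eq_bot_iff]
    rintro ⟨v, hv⟩ hker
    have hshift : ∀ s, v (σ s) = μ * v s := fun s =>
      congr_fun (Module.End.mem_eigenspace_iff.mp hv) s
    have hpow : ∀ (k : ℕ) s, v ((σ ^ k) s) = μ ^ k * v s := by
      intro k
      induction k with
      | zero => simp
      | succ k ih => intro s; rw [pow_succ', mul_apply, hshift, ih, pow_succ']; ring
    ext s
    obtain ⟨k, hk⟩ := (Quotient.mk_out (s := SameCycle.setoid σ) s).exists_nat_pow_eq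
    have h0 : v (Quotient.mk _ s).out = 0 := congr_fun (LinearMap.mem_ker.mp hker) _
    show v s = 0
    rw [← hk, hpow, h0, mul_zero]
  simpa [Nat.card_eq_fintype_card] using LinearMap.finrank_le_finrank_of_injective hinj

end Equiv.Perm

section Recovery

variable {m n R : Type*}

def RecoversUnder [Fintype m] [DecidableEq m] [Fintype n] [CommRing R] (A : Matrix m n R)
    (σ : Equiv.Perm m) : Prop :=
  ∀ x x' : n → R, A *ᵥ x = σ.permMatrix R *ᵥ (A *ᵥ x') → x = x'

/-- `[A | A - ΠA]` for `Π = σ.permMatrix R`, since `A.submatrix σ id = ΠA`. -/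
def recoveryMatrix [Ring R] (σ : Equiv.Perm m) (A : Matrix m n R) : Matrix m (n ⊕ n) R :=
  fromCols A (A - A.submatrix σ id)

theorem recoversUnder_of_injective_transpose_mul [Fintype m] [DecidableEq m] [Fintype n]
    [CommRing R] {k : Type*} {A : Matrix m n R} {σ : Equiv.Perm m} {W : Matrix m k R}
    (hW : W.submatrix σ id = W) (h : Function.Injective (Wᵀ * A).mulVec) : RecoversUnder A σ := by
  intro x x' hx
  apply h
  rw [← mulVec_mulVec, ← mulVec_mulVec, hx, permMatrix_mulVec]
  conv_lhs => rw [← hW, transpose_submatrix, submatrix_mulVec_equiv]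
  simp [Function.comp_def]

theorem recoversUnder_of_injective_recoveryMatrix [Fintype m] [DecidableEq m] [Fintype n]
    [CommRing R] {A : Matrix m n R} {σ : Equiv.Perm m}
    (h : Function.Injective (recoveryMatrix σ A).mulVec) : RecoversUnder A σ := by
  intro x x' hx
  have hzero : recoveryMatrix σ A *ᵥ Sum.elim (x - x') x' = recoveryMatrix σ A *ᵥ 0 := by
    have hσ : A.submatrix σ id *ᵥ x' = (A *ᵥ x') ∘ σ := rfl
    rw [recoveryMatrix, fromCols_mulVec_sumElim, mulVec_zero, sub_mulVec, mulVec_sub, hx,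
      permMatrix_mulVec, hσ]
    abel
  simpa [sub_eq_zero] using congr_arg (· ∘ Sum.inl) (h hzero)

theorem injective_recoveryMatrix_mul_fromRows_one_one [Fintype n] [DecidableEq n] [Field R]
    {σ : Equiv.Perm m} {B : Matrix m (n ⊕ n) R} {μ : n ⊕ n → R} (hB : Function.Injective B.mulVec)
    (hσ : B.submatrix σ id = B * diagonal μ) (hμ : ∀ j, μ (.inl j) ≠ μ (.inr j)) :
    Function.Injective (recoveryMatrix σ (B * (fromRows 1 1 : Matrix (n ⊕ n) n R))).mulVec := by
  set F : Matrix (n ⊕ n) n R := fromRows 1 1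
  set C : Matrix (n ⊕ n) (n ⊕ n) R :=
    fromBlocks 1 (diagonal fun j => 1 - μ (.inl j)) 1 (diagonal fun j => 1 - μ (.inr j))
  have hfactor : recoveryMatrix σ (B * F) = B * C := by
    have hshift : (B * F).submatrix σ id = B * diagonal μ * F := by
      rw [← hσ]; rfl
    have hC : C = fromCols F ((1 - diagonal μ) * F) := by
      rw [Matrix.sub_mul, Matrix.one_mul]
      ext (i | i) (j | j) <;>
        simp [C, F, diagonal_mul, diagonal_apply, Matrix.one_apply, ite_sub_ite]
    rw [recoveryMatrix, hshift, hC, mul_fromCols, Matrix.sub_mul, Matrix.mul_sub, Matrix.one_mul,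
      Matrix.mul_assoc]
  have hdet : C.det ≠ 0 := by
    rw [det_fromBlocks_one₁₁, Matrix.one_mul, diagonal_sub, det_diagonal]
    exact Finset.prod_ne_zero_iff.mpr fun j _ => by simpa [sub_eq_zero] using hμ j
  have hC : Function.Injective C.mulVec := by
    simpa using (det_submatrix_ne_zero_iff_mulVec_injective C (Equiv.refl _)).mp hdet
  rw [hfactor]
  intro v w h
  simp only [← mulVec_mulVec] at h
  exact hC (hB h)

theorem exists_injective_recoveryMatrix [Fintype m] [Fintype n] [DecidableEq n] {K : Type*}
    [Field K] [IsAlgClosed K] [CharZero K] (σ : Equiv.Perm m)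
    (hm : Nat.card m = Nat.card n + Nat.card n)
    (hσ : Nat.card (Quotient (Equiv.Perm.SameCycle.setoid σ)) ≤ Nat.card n) :
    ∃ A : Matrix m n K, Function.Injective (recoveryMatrix σ A).mulVec := by
  obtain ⟨b, hb⟩ := (Equiv.Perm.isSemisimple_funLeft K σ).exists_eigenbasis
  have := Module.Finite.finite_basis b
  obtain ⟨e, he⟩ := exists_sumEquiv_apply_inl_ne_apply_inr (n := n) Sigma.fst
    (by rw [← Module.finrank_eq_nat_card_basis b, Module.finrank_fintype_fun_eq_card,
      ← Nat.card_eq_fintype_card, hm])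
    (fun μ => by
      rw [Nat.card_congr (Equiv.sigmaSubtype μ), Nat.card_eq_fintype_card, Fintype.card_fin]
      exact (Equiv.Perm.finrank_eigenspace_funLeft_le K σ μ).trans hσ)
  let B : Matrix m (n ⊕ n) K := of fun s c => b (e c) s
  refine ⟨_, injective_recoveryMatrix_mul_fromRows_one_one (B := B) (μ := fun c => (e c).1)
    (mulVec_injective_iff.mpr (b.linearIndependent.comp e e.injective)) ?_ he⟩
  ext s c
  simpa [B, mul_diagonal, mul_comm] using congr_fun (hb (e c)) s

theorem aeval_det_recoveryMatrix_mvPolynomialX [Fintype n] [DecidableEq n] {S : Type*}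
    [CommRing R] [CommRing S] [Algebra R S] (σ : Equiv.Perm m) (e : n ⊕ n ≃ m) (a : m × n → S) :
    MvPolynomial.aeval a ((recoveryMatrix σ (mvPolynomialX m n R)).submatrix e id).det =
      ((recoveryMatrix σ (of fun i j => a (i, j))).submatrix e id).det := by
  rw [AlgHom.map_det]
  congr 1
  ext i (j | j) <;> simp [recoveryMatrix, MvPolynomial.aeval_X]

theorem exists_mvPolynomial_recoversUnder_of_card_le_card_cycles [Fintype m] [DecidableEq m]
    [Fintype n] [DecidableEq n] (σ : Equiv.Perm m)
    (hσ : Nat.card n ≤ Nat.card (Quotient (Equiv.Perm.SameCycle.setoid σ))) :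
    ∃ G : MvPolynomial (m × n) ℝ, G ≠ 0 ∧
      ∀ a, MvPolynomial.eval a G ≠ 0 → RecoversUnder (of fun i j => a (i, j)) σ := by
  classical
  obtain ⟨g, hg⟩ : ∃ g : n → m, ∀ l l', σ.SameCycle (g l) (g l') → l = l' := by
    obtain ⟨ι⟩ := Function.Embedding.nonempty_of_card_le (α := n)
      (β := Quotient (Equiv.Perm.SameCycle.setoid σ)) (by simpa [Nat.card_eq_fintype_card] using hσ)
    refine ⟨fun l => (ι l).out, fun l l' h => ι.injective ?_⟩
    simpa using Quotient.sound (s := Equiv.Perm.SameCycle.setoid σ) h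
  let W : Matrix m n ℝ := of fun s l => if σ.SameCycle s (g l) then 1 else 0
  have hW : W.submatrix σ id = W := by
    ext s l; simp [W, Equiv.Perm.sameCycle_apply_left]
  have heval : ∀ a, MvPolynomial.eval a
      (Wᵀ.map (algebraMap ℝ (MvPolynomial (m × n) ℝ)) * mvPolynomialX m n ℝ).det =
        (Wᵀ * of fun i j => a (i, j)).det := by
    intro a
    rw [RingHom.map_det]
    congr 1
    ext l j
    simp [mul_apply]
  refine ⟨(Wᵀ.map (algebraMap ℝ (MvPolynomial (m × n) ℝ)) * mvPolynomialX m n ℝ).det,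
    fun h0 => ?_, fun a ha => recoversUnder_of_injective_transpose_mul hW ?_⟩
  · have hone : (Wᵀ * of fun s l => if s = g l then (1 : ℝ) else 0) = 1 := by
      ext l l'
      simp only [mul_apply, transpose_apply, of_apply, W, mul_ite, mul_one, mul_zero,
        Finset.sum_ite_eq', Finset.mem_univ, if_true, one_apply]
      by_cases hl : l = l'
      · simp [hl, Equiv.Perm.SameCycle.refl]
      · have : ¬σ.SameCycle (g l') (g l) := fun h => hl (hg _ _ h).symm
        simp [hl, this]
    have h1 := heval fun p => if p.1 = g p.2 then 1 else 0
    rw [h0, map_zero] at h1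
    simp [hone] at h1
  · simpa using (det_submatrix_ne_zero_iff_mulVec_injective _ (Equiv.refl n)).mp (heval a ▸ ha)

theorem exists_mvPolynomial_recoversUnder_of_card_cycles_le [Fintype m] [DecidableEq m]
    [Fintype n] [DecidableEq n] (σ : Equiv.Perm m) (hm : Nat.card m = Nat.card n + Nat.card n)
    (hσ : Nat.card (Quotient (Equiv.Perm.SameCycle.setoid σ)) ≤ Nat.card n) :
    ∃ G : MvPolynomial (m × n) ℝ, G ≠ 0 ∧
      ∀ a, MvPolynomial.eval a G ≠ 0 → RecoversUnder (of fun i j => a (i, j)) σ := by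
  have e : n ⊕ n ≃ m := Fintype.equivOfCardEq (by simp [← Nat.card_eq_fintype_card, hm])
  refine ⟨((recoveryMatrix σ (mvPolynomialX m n ℝ)).submatrix e id).det, fun h0 => ?_,
    fun a ha => ?_⟩
  · obtain ⟨A, hA⟩ := exists_injective_recoveryMatrix (K := ℂ) σ hm hσ
    have h1 := aeval_det_recoveryMatrix_mvPolynomialX (R := ℝ) σ e fun p => A p.1 p.2
    rw [h0, map_zero] at h1
    exact (det_submatrix_ne_zero_iff_mulVec_injective _ e).mpr hA h1.symm
  · refine recoversUnder_of_injective_recoveryMatrix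
      ((det_submatrix_ne_zero_iff_mulVec_injective _ e).mp ?_)
    rw [← aeval_det_recoveryMatrix_mvPolynomialX (R := ℝ)]
    exact ha

theorem exists_forall_recoversUnder [Fintype m] [DecidableEq m] [Fintype n] [DecidableEq n]
    (hm : Nat.card m = Nat.card n + Nat.card n) : ∃ A : Matrix m n ℝ, ∀ σ, RecoversUnder A σ := by
  have hG : ∀ σ : Equiv.Perm m, ∃ G : MvPolynomial (m × n) ℝ, G ≠ 0 ∧
      ∀ a, MvPolynomial.eval a G ≠ 0 → RecoversUnder (of fun i j => a (i, j)) σ := fun σ =>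
    (le_total (Nat.card n) (Nat.card (Quotient (Equiv.Perm.SameCycle.setoid σ)))).elim
      (exists_mvPolynomial_recoversUnder_of_card_le_card_cycles σ)
      (exists_mvPolynomial_recoversUnder_of_card_cycles_le σ hm)
  choose G hG0 hG using hG
  obtain ⟨a, ha⟩ := MvPolynomial.exists_forall_eval_ne_zero hG0
  exact ⟨_, fun σ => hG σ a (ha σ)⟩

end Recovery

theorem stmt11_general (K : ℕ) :
    ∃ A : Matrix (Fin (2 * K)) (Fin K) ℝ,
      ∀ (x x' : Fin K → ℝ) (σ : Equiv.Perm (Fin (2 * K))),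
        A.mulVec x = (σ.permMatrix ℝ).mulVec (A.mulVec x') → x = x' := by
  obtain ⟨A, hA⟩ := exists_forall_recoversUnder (m := Fin (2 * K)) (n := Fin K) (by simp [two_mul])
  exact ⟨A, fun x x' σ => hA σ x x'⟩

/-- For every `K ≥ 1` there exists a deterministic `2K × K` real matrix admitting
universal recovery from unlabeled measurements. -/
theorem stmt11 (K : ℕ) (hK : 1 ≤ K) :
    ∃ A : Matrix (Fin (2 * K)) (Fin K) ℝ,
      ∀ (x x' : Fin K → ℝ) (σ : Equiv.Perm (Fin (2 * K))),
        A.mulVec x = (σ.permMatrix ℝ).mulVec (A.mulVec x') → x = x' :=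
  stmt11_general K
end

section
/- Let K > 1 and N < 2K, and let B be an N×K matrix whose entries are i.i.d. random variables drawn from a distribution absolutely continuous with respect to Lebesgue measure. Then with probability 1 there exist an N×N permutation matrix Π and vectors x, x̂ ∈ R^K with x ≠ x̂ such that B x = Π B x̂. -/
/-!
A nonzero kernel vector `a` of `B` always gives `B a = Π B 0`. When `N ≤ K` the only other
case is `N = K` with `B` invertible, and then any `v ≠ Π v` is hit twice. When `N > K`, let `Π` be
the cyclic shift. Since `N < 2K`, the map `(x, x̂) ↦ B x - Π B x̂` from `ℝ^{2K}` to `ℝ^N` has a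
nonzero kernel element. If `x = x̂` then `B x` is fixed by the cyclic shift and so is constant:
either `B x = 0` (the kernel case again) or the all-ones vector lies in the column span of `B`.
The latter forces the top `(K+1) × (K+1)` block of `[B | 1]` to be singular. Its determinant is a
nonzero polynomial in the entries of `B`, and by Fubini and induction on the number of variables
the zero set of such a polynomial is null for every product of atomless measures.
-/

open MeasureTheory ProbabilityTheory Matrix

namespace MvPolynomial

variable (μ : Measure ℝ) [SigmaFinite μ] [NullSingletonClass μ]

theorem ae_eval_ne_zero_fin :
    ∀ {n : ℕ} {p : MvPolynomial (Fin n) ℝ}, p ≠ 0 →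
      ∀ᵐ v ∂Measure.pi (fun _ : Fin n => μ), eval v p ≠ 0
  | 0, p, hp => by
    obtain ⟨c, rfl⟩ := C_surjective (Fin 0) p
    exact .of_forall fun v => by simpa [eval_C] using hp
  | n + 1, p, hp => by
    set q := finSuccEquiv ℝ n p
    have hq : q ≠ 0 := by simpa [q] using hp
    have hsplit := (measurePreserving_piFinSuccAbove (fun _ : Fin (n + 1) => μ) 0).symm
    have hcons : ∀ w : ℝ × (Fin n → ℝ),
        (MeasurableEquiv.piFinSuccAbove (fun _ => ℝ) 0).symm w = Fin.cons w.1 w.2 := by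
      simp [MeasurableEquiv.piFinSuccAbove, Fin.consEquiv]
    have hmeas : MeasurableSet {w : ℝ × (Fin n → ℝ) | eval (Fin.cons w.1 w.2) p ≠ 0} := by
      simp_rw [← hcons]
      exact (continuous_eval p).measurable.comp hsplit.measurable (measurableSet_singleton 0).compl
    rw [← hsplit.map_eq, (MeasurableEquiv.measurableEmbedding _).ae_map_iff]
    simp only [hcons]
    rw [Measure.ae_prod_iff_ae_ae hmeas, Measure.ae_ae_comm hmeas]
    filter_upwards [ae_eval_ne_zero_fin (Polynomial.leadingCoeff_ne_zero.mpr hq)] with z hz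
    have hqz : q.map (eval z) ≠ 0 := fun h => hz <| by
      simpa using congrArg (Polynomial.coeff · q.natDegree) h
    have hroots : μ {y | (q.map (eval z)).eval y = 0} = 0 :=
      (Polynomial.finite_setOfPred_isRoot hqz).countable.measure_zero μ
    filter_upwards [measure_eq_zero_iff_ae_notMem.mp hroots] with y hy
    simpa [eval_eq_eval_mv_eval'] using hy

theorem ae_eval_ne_zero {ι : Type*} [Fintype ι] {p : MvPolynomial ι ℝ} (hp : p ≠ 0) :
    ∀ᵐ v ∂Measure.pi (fun _ : ι => μ), eval v p ≠ 0 := by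
  let e := Fintype.equivFin ι
  have hmp := measurePreserving_piCongrLeft (fun _ : ι => μ) e.symm
  rw [← hmp.map_eq, (MeasurableEquiv.measurableEmbedding _).ae_map_iff]
  have hrename : rename e p ≠ 0 := (rename_injective _ e.injective).ne_iff' (map_zero _) |>.mpr hp
  filter_upwards [ae_eval_ne_zero_fin μ hrename] with v hv
  rw [eval_rename] at hv
  convert hv using 3
  funext i
  simp [MeasurableEquiv.piCongrLeft, Equiv.piCongrLeft_apply_eq_cast]

end MvPolynomial

namespace Matrix

section AugmentOnesTop

variable {R : Type*} {N K : ℕ}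

def augmentOnesTop [One R] (h : K + 1 ≤ N) (A : Matrix (Fin N) (Fin K) R) :
    Matrix (Fin (K + 1)) (Fin (K + 1)) R :=
  of fun i => Fin.snoc (α := fun _ => R) (A (Fin.castLE h i)) 1

theorem det_augmentOnesTop_eq_zero_of_mulVec_eq_one [Field R] (h : K + 1 ≤ N)
    {A : Matrix (Fin N) (Fin K) R} {x : Fin K → R} (hx : A *ᵥ x = 1) :
    (augmentOnesTop h A).det = 0 := by
  rw [← exists_mulVec_eq_zero_iff]
  refine ⟨Fin.snoc x (-1), fun h0 => by simpa using congrFun h0 (Fin.last K), ?_⟩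
  ext i
  have := congrFun hx (Fin.castLE h i)
  simp only [mulVec, dotProduct, Fin.sum_univ_castSucc, augmentOnesTop, of_apply,
    Fin.snoc_castSucc, Fin.snoc_last] at this ⊢
  simp [this]

theorem augmentOnesTop_map {S : Type*} [Semiring R] [Semiring S] (f : R →+* S)
    (h : K + 1 ≤ N) (A : Matrix (Fin N) (Fin K) R) :
    (augmentOnesTop h A).map f = augmentOnesTop h (A.map f) := by
  ext i j
  cases j using Fin.lastCases <;> simp [augmentOnesTop]

theorem det_augmentOnesTop_diagonalOnes [CommRing R] (h : K + 1 ≤ N) :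
    (augmentOnesTop h (of fun (i : Fin N) (j : Fin K) => if (i : ℕ) = j then (1 : R) else 0)).det
      = 1 := by
  rw [det_of_isUpperTriangular]
  · refine Finset.prod_eq_one fun i _ => ?_
    cases i using Fin.lastCases <;> simp [augmentOnesTop]
  · intro i j hji
    cases j using Fin.lastCases with
    | last => exact absurd hji (not_lt.mpr (Fin.le_last i))
    | cast j =>
      have : (i : ℕ) ≠ j := by simp [Fin.lt_def] at hji; omega
      simp [augmentOnesTop, this]

end AugmentOnesTop

theorem ae_forall_mulVec_ne_one {N K : ℕ} (μ : Measure ℝ) [SigmaFinite μ] [NullSingletonClass μ]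
    (hKN : K < N) :
    ∀ᵐ v ∂Measure.pi (fun _ : Fin N × Fin K => μ), ∀ x, of (fun i j => v (i, j)) *ᵥ x ≠ 1 := by
  set p := (augmentOnesTop hKN (mvPolynomialX (Fin N) (Fin K) ℝ)).det
  have heval : ∀ v, MvPolynomial.eval v p = (augmentOnesTop hKN (of fun i j => v (i, j))).det := by
    intro v
    rw [RingHom.map_det, RingHom.mapMatrix_apply, augmentOnesTop_map,
      show ⇑(MvPolynomial.eval v) = MvPolynomial.eval₂ (RingHom.id ℝ)
        (fun q => of (fun i j => v (i, j)) q.1 q.2) from rfl, mvPolynomialX_map_eval₂]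
  have hp : p ≠ 0 := fun h0 => by
    simpa [h0, det_augmentOnesTop_diagonalOnes] using
      heval fun q : Fin N × Fin K => if (q.1 : ℕ) = q.2 then (1 : ℝ) else 0
  filter_upwards [MvPolynomial.ae_eval_ne_zero μ hp] with v hv x hx
  exact hv ((heval v).trans (det_augmentOnesTop_eq_zero_of_mulVec_eq_one hKN hx))

def HasUnlabeledCollision {m n R : Type*} [Fintype m] [DecidableEq m] [Fintype n] [Semiring R]
    (B : Matrix m n R) : Prop :=
  ∃ (σ : Equiv.Perm m) (x xhat : n → R), x ≠ xhat ∧ B *ᵥ x = σ.permMatrix R *ᵥ (B *ᵥ xhat)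

section Collision

variable {m n R : Type*} [Fintype m] [DecidableEq m] [Fintype n]

theorem hasUnlabeledCollision_of_mulVec_eq_zero [Semiring R] {B : Matrix m n R} {a : n → R}
    (ha : a ≠ 0) (hBa : B *ᵥ a = 0) : B.HasUnlabeledCollision :=
  ⟨1, a, 0, ha, by rw [hBa, mulVec_zero, mulVec_zero]⟩

theorem hasUnlabeledCollision_of_surjective [CommRing R] [Nontrivial R] [Nontrivial m]
    {B : Matrix m n R} (hB : Function.Surjective B.mulVec) : B.HasUnlabeledCollision := by
  obtain ⟨i, j, hij⟩ := exists_pair_ne m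
  set v : m → R := Pi.single i 1
  obtain ⟨x, hx⟩ := hB (v ∘ Equiv.swap i j)
  obtain ⟨xhat, hxhat⟩ := hB v
  refine ⟨Equiv.swap i j, x, xhat, fun h => ?_, by rw [hx, hxhat, permMatrix_mulVec]⟩
  have := congrFun (hx.symm.trans (h ▸ hxhat)) j
  simp [v, hij.symm] at this

theorem hasUnlabeledCollision_of_card_le [Field R] (hn : 1 < Fintype.card n)
    (hmn : Fintype.card m ≤ Fintype.card n) (B : Matrix m n R) : B.HasUnlabeledCollision := by
  by_cases hinj : Function.Injective B.mulVecLin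
  · have hcard : Fintype.card m = Fintype.card n :=
      le_antisymm hmn (by simpa using LinearMap.finrank_le_finrank_of_injective hinj)
    have : Nontrivial m := Fintype.one_lt_card_iff_nontrivial.mp (hcard ▸ hn)
    exact hasUnlabeledCollision_of_surjective
      ((LinearMap.injective_iff_surjective_of_finrank_eq_finrank (by simpa using hcard.symm)).mp
        hinj)
  · obtain ⟨a, b, hab, hne⟩ := Function.not_injective_iff.mp hinj
    exact hasUnlabeledCollision_of_mulVec_eq_zero (sub_ne_zero.mpr hne)
      (by simpa [mulVec_sub, sub_eq_zero] using hab)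

end Collision

theorem eq_of_comp_finRotate_eq {α : Type*} {N : ℕ} {v : Fin N → α} (hv : v ∘ finRotate N = v)
    (i j : Fin N) : v i = v j := by
  obtain _ | n := N
  · exact i.elim0
  suffices ∀ i : Fin (n + 1), v i = v 0 by rw [this i, this j]
  intro i
  induction i using Fin.induction with
  | zero => rfl
  | succ i ih =>
    rw [← ih, ← Fin.coeSucc_eq_succ, ← congrFun hv i.castSucc, Function.comp_apply,
      finRotate_apply]

theorem hasUnlabeledCollision_of_forall_mulVec_ne_one {R : Type*} [Field R] {N K : ℕ}
    (hN : N < 2 * K) {B : Matrix (Fin N) (Fin K) R} (hB : ∀ x, B *ᵥ x ≠ 1) :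
    B.HasUnlabeledCollision := by
  set P := (finRotate N).permMatrix R
  let L := B.mulVecLin ∘ₗ LinearMap.fst R _ _ - (P * B).mulVecLin ∘ₗ LinearMap.snd R _ _
  obtain ⟨⟨a, b⟩, hab, hne⟩ := Submodule.exists_mem_ne_zero_of_ne_bot
    (LinearMap.ker_ne_bot_of_finrank_lt (f := L) (by simp; omega))
  have hcol : B *ᵥ a = P *ᵥ (B *ᵥ b) := by
    simpa [L, sub_eq_zero, mulVec_mulVec] using hab
  by_cases hab' : a = b
  · subst hab'
    have hconst := eq_of_comp_finRotate_eq (v := B *ᵥ a) (by rw [← permMatrix_mulVec, ← hcol])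
    by_cases hBa : B *ᵥ a = 0
    · exact hasUnlabeledCollision_of_mulVec_eq_zero (fun ha => hne (by simp [ha])) hBa
    · obtain ⟨i, hi⟩ := Function.ne_iff.mp hBa
      refine absurd ?_ (hB (((B *ᵥ a) i)⁻¹ • a))
      ext j
      simpa [mulVec_smul, hconst j i] using inv_mul_cancel₀ hi
  · exact ⟨finRotate N, a, b, hab', hcol⟩

end Matrix

theorem stmt17_general {N K : ℕ} (hK : 1 < K) (hN : N < 2 * K) {Ω : Type*} [MeasurableSpace Ω]
    (P : Measure Ω)
    (B : Ω → Matrix (Fin N) (Fin K) ℝ)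
    (hmeas : ∀ i j, Measurable fun ω => B ω i j)
    (hindep : iIndepFun
      (fun (q : Fin N × Fin K) ω => B ω q.1 q.2) P)
    (μ : Measure ℝ) [IsProbabilityMeasure μ] (hac : μ ≪ volume)
    (hid : ∀ i j, P.map (fun ω => B ω i j) = μ) :
    ∀ᵐ ω ∂P, ∃ (σ : Equiv.Perm (Fin N)) (x xhat : Fin K → ℝ), x ≠ xhat ∧
      (B ω).mulVec x = (σ.permMatrix ℝ).mulVec ((B ω).mulVec xhat) := by
  rcases le_or_gt N K with hNK | hKN
  · exact .of_forall fun ω => hasUnlabeledCollision_of_card_le (by simpa using hK)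
      (by simpa using hNK) (B ω)
  have : NullSingletonClass μ := ⟨fun y => hac (measure_singleton y)⟩
  have hentries : Measurable fun ω (q : Fin N × Fin K) => B ω q.1 q.2 :=
    measurable_pi_lambda _ fun q => hmeas q.1 q.2
  have hlaw : P.map (fun ω (q : Fin N × Fin K) => B ω q.1 q.2) = Measure.pi fun _ => μ := by
    rw [hindep.map_fun_eq_pi_map fun q : Fin N × Fin K => (hmeas q.1 q.2).aemeasurable]
    simp only [hid]
  have hgood := ae_forall_mulVec_ne_one μ hKN
  rw [← hlaw] at hgood
  filter_upwards [ae_of_ae_map hentries.aemeasurable hgood] with ω hω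
  exact hasUnlabeledCollision_of_forall_mulVec_ne_one hN hω

/-- Converse to the unlabeled sensing theorem: for `K > 1` and `N < 2K`, if the entries of
the `N × K` matrix `B` are i.i.d. from a continuous distribution, then with probability 1
there exist a permutation matrix `Π` and distinct vectors `x ≠ x̂` with `B x = Π (B x̂)`. -/
theorem stmt17 {N K : ℕ} (hK : 1 < K) (hN : N < 2 * K) {Ω : Type*} [MeasurableSpace Ω]
    (P : Measure Ω) [IsProbabilityMeasure P]
    (B : Ω → Matrix (Fin N) (Fin K) ℝ)
    (hmeas : ∀ i j, Measurable fun ω => B ω i j)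
    (hindep : iIndepFun
      (fun (q : Fin N × Fin K) ω => B ω q.1 q.2) P)
    (μ : Measure ℝ) [IsProbabilityMeasure μ] (hac : μ ≪ volume)
    (hid : ∀ i j, P.map (fun ω => B ω i j) = μ) :
    ∀ᵐ ω ∂P, ∃ (σ : Equiv.Perm (Fin N)) (x xhat : Fin K → ℝ), x ≠ xhat ∧
      (B ω).mulVec x = (σ.permMatrix ℝ).mulVec ((B ω).mulVec xhat) :=
  stmt17_general hK hN P B hmeas hindep μ hac hid
end

section
/- Let A be an M×K matrix satisfying: (i) S' A x' = S'' A x'' for selection matrices S', S'' implies x' = x'', and (ii) A has linearly independent columns. Fix x^0 ∈ R^K and B = S^0 A for some selection matrix S^0, and let y = B x^0 + w with noise w of norm ||w|| = ||B x^0|| · SNR^{-1/2}. Let x̂^0 be a minimizer over x ∈ R^K and selection matrices S of ||y - S A x||. Then ||x^0 - x̂^0|| → 0 as SNR → ∞. -/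
set_option synthInstance.maxHeartbeats 1000000
set_option maxHeartbeats 1000000

open Matrix

/-- The Euclidean norm of a vector in `ℝᴺ`. -/
noncomputable def enorm' {N : ℕ} (v : Fin N → ℝ) : ℝ := Real.sqrt (∑ i, v i ^ 2)

noncomputable def toE {n : ℕ} : (Fin n → ℝ) ≃ₗ[ℝ] EuclideanSpace ℝ (Fin n) :=
  (WithLp.linearEquiv 2 ℝ (Fin n → ℝ)).symm

lemma enorm'_eq {n : ℕ} (v : Fin n → ℝ) : enorm' v = ‖toE v‖ := by
  simp only [EuclideanSpace.norm_eq, Real.norm_eq_abs, sq_abs, enorm']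
  rfl

lemma enorm'_nonneg {n : ℕ} (v : Fin n → ℝ) : 0 ≤ enorm' v := Real.sqrt_nonneg _

lemma aux_bound {X Y Z : Type*} [NormedAddCommGroup X] [NormedSpace ℝ X]
    [NormedAddCommGroup Y] [NormedSpace ℝ Y] [NormedAddCommGroup Z] [NormedSpace ℝ Z]
    [FiniteDimensional ℝ X]
    (T : X →ₗ[ℝ] Y) (D : X →ₗ[ℝ] Z) (h : LinearMap.ker T ≤ LinearMap.ker D) :
    ∃ c : ℝ, 0 ≤ c ∧ ∀ x, ‖D x‖ ≤ c * ‖T x‖ := by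
  let q : (X ⧸ LinearMap.ker T) →ₗ[ℝ] Z := Submodule.liftQ (LinearMap.ker T) D h
  let e := T.quotKerEquivRange
  let E : LinearMap.range T →ₗ[ℝ] Z := q.comp e.symm.toLinearMap
  let E' := LinearMap.toContinuousLinearMap E
  refine ⟨‖E'‖, E'.opNorm_nonneg, fun x => ?_⟩
  have hx : D x = E' ⟨T x, LinearMap.mem_range_self T x⟩ := by
    show D x = q (e.symm ⟨T x, _⟩)
    have : e.symm ⟨T x, LinearMap.mem_range_self T x⟩ = Submodule.Quotient.mk x := by
      rw [LinearEquiv.symm_apply_eq]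
      exact Subtype.ext (T.quotKerEquivRange_apply_mk x).symm
    rw [this]
    rfl
  rw [hx]
  calc ‖E' ⟨T x, LinearMap.mem_range_self T x⟩‖
      ≤ ‖E'‖ * ‖(⟨T x, LinearMap.mem_range_self T x⟩ : LinearMap.range T)‖ := E'.le_opNorm _
    _ = ‖E'‖ * ‖T x‖ := rfl

/-- Local stability of unlabeled sensing under additive noise. Suppose the `M × K` matrix
`A` satisfies: (i) `S' A x' = S'' A x''` for selections `S', S''` (modeled by injective maps
`Fin N → Fin M`) implies `x' = x''`; and (ii) `A` has linearly independent columns. Fix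
`x⁰` and `B = S⁰ A`, and observe `y = B x⁰ + w` with `‖w‖ = ‖B x⁰‖ · SNR^{-1/2}`. Then any
minimizer `x̂⁰` of `‖y - S A x‖` over selections `S` and `x` satisfies
`‖x⁰ - x̂⁰‖ → 0` as `SNR → ∞`. -/
theorem stmt19 {M N K : ℕ} (A : Matrix (Fin M) (Fin K) ℝ)
    (h1 : ∀ f g : Fin N → Fin M, Function.Injective f → Function.Injective g →
      ∀ x' x'' : Fin K → ℝ,
        (A.submatrix f id).mulVec x' = (A.submatrix g id).mulVec x'' → x' = x'')
    (h2 : LinearIndependent ℝ Aᵀ)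
    (x0 : Fin K → ℝ) (f0 : Fin N → Fin M) (hf0 : Function.Injective f0) :
    ∀ ε > (0 : ℝ), ∃ snr0 : ℝ, 0 < snr0 ∧ ∀ snr : ℝ, snr0 ≤ snr →
      ∀ w : Fin N → ℝ,
        enorm' w = enorm' ((A.submatrix f0 id).mulVec x0) * snr ^ (-(1 / 2 : ℝ)) →
      ∀ (xhat : Fin K → ℝ) (fhat : Fin N → Fin M), Function.Injective fhat →
        (∀ (x : Fin K → ℝ) (f : Fin N → Fin M), Function.Injective f →
          enorm' ((A.submatrix f0 id).mulVec x0 + w - (A.submatrix fhat id).mulVec xhat)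
            ≤ enorm' ((A.submatrix f0 id).mulVec x0 + w - (A.submatrix f id).mulVec x)) →
        enorm' (x0 - xhat) < ε := by
  classical
  -- key quantitative estimate for each selection map
  have key : ∀ f : Fin N → Fin M, ∃ c : ℝ, 0 ≤ c ∧ (Function.Injective f →
      ∀ u v : Fin K → ℝ, enorm' (v - u) ≤
        c * enorm' ((A.submatrix f id).mulVec u - (A.submatrix f0 id).mulVec v)) := by
    intro f
    by_cases hf : Function.Injective f
    · let Lf : (Fin K → ℝ) →ₗ[ℝ] EuclideanSpace ℝ (Fin N) :=
        (toE.toLinearMap).comp (A.submatrix f id).mulVecLin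
      let L0 : (Fin K → ℝ) →ₗ[ℝ] EuclideanSpace ℝ (Fin N) :=
        (toE.toLinearMap).comp (A.submatrix f0 id).mulVecLin
      let T : ((Fin K → ℝ) × (Fin K → ℝ)) →ₗ[ℝ] EuclideanSpace ℝ (Fin N) :=
        Lf.comp (LinearMap.fst ℝ _ _) - L0.comp (LinearMap.snd ℝ _ _)
      let D : ((Fin K → ℝ) × (Fin K → ℝ)) →ₗ[ℝ] EuclideanSpace ℝ (Fin K) :=
        (toE.toLinearMap).comp (LinearMap.fst ℝ _ _ - LinearMap.snd ℝ _ _)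
      have hker : LinearMap.ker T ≤ LinearMap.ker D := by
        rintro ⟨u, v⟩ hm
        have hm' : toE ((A.submatrix f id).mulVec u) - toE ((A.submatrix f0 id).mulVec v) = 0 := hm
        have huv : u = v := by
          apply h1 f f0 hf hf0
          exact toE.injective (sub_eq_zero.mp hm')
        show toE (u - v) = 0
        rw [huv, sub_self, map_zero]
      obtain ⟨c, hc0, hc⟩ := aux_bound T D hker
      refine ⟨c, hc0, fun _ u v => ?_⟩
      have h := hc (u, v)
      have hD : ‖D (u, v)‖ = enorm' (v - u) := by
        show ‖toE (u - v)‖ = enorm' (v - u)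
        rw [enorm'_eq, show v - u = -(u - v) by ring, map_neg, norm_neg]
      have hT : ‖T (u, v)‖ = enorm' ((A.submatrix f id).mulVec u - (A.submatrix f0 id).mulVec v) := by
        show ‖toE ((A.submatrix f id).mulVec u) - toE ((A.submatrix f0 id).mulVec v)‖ = _
        rw [enorm'_eq, map_sub]
      rw [hD, hT] at h
      exact h
    · exact ⟨0, le_rfl, fun h => absurd h hf⟩
  choose c hc0 hc using key
  set C : ℝ := ∑ f : Fin N → Fin M, c f with hCdef
  have hCge : ∀ f, c f ≤ C :=
    fun f => Finset.single_le_sum (fun g _ => hc0 g) (Finset.mem_univ f)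
  have hC0 : 0 ≤ C := le_trans (hc0 f0) (hCge f0)
  set B0 : ℝ := enorm' ((A.submatrix f0 id).mulVec x0) with hB0def
  have hB0 : 0 ≤ B0 := enorm'_nonneg _
  set R : ℝ := 2 * C * B0 with hRdef
  have hR0 : 0 ≤ R := by positivity
  intro ε hε
  refine ⟨(R / ε) ^ 2 + 1, by positivity, fun snr hsnr w hw xhat fhat hfhat hmin => ?_⟩
  have hspos : 0 < snr := lt_of_lt_of_le (by positivity) hsnr
  have hsqrt : Real.sqrt snr > R / ε := by
    calc R / ε = Real.sqrt ((R / ε) ^ 2) := (Real.sqrt_sq (div_nonneg hR0 hε.le)).symm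
      _ < Real.sqrt ((R / ε) ^ 2 + 1) := Real.sqrt_lt_sqrt (by positivity) (lt_add_one _)
      _ ≤ Real.sqrt snr := Real.sqrt_le_sqrt hsnr
  have hsqpos : 0 < Real.sqrt snr := Real.sqrt_pos.mpr hspos
  -- the residual bound
  have h0 := hmin x0 f0 hf0
  rw [add_sub_cancel_left] at h0
  have htri : enorm' ((A.submatrix fhat id).mulVec xhat - (A.submatrix f0 id).mulVec x0)
      ≤ 2 * enorm' w := by
    set a := toE ((A.submatrix f0 id).mulVec x0)
    set b := toE ((A.submatrix fhat id).mulVec xhat)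
    set ww := toE w
    have h0' : ‖a + ww - b‖ ≤ ‖ww‖ := by
      have := h0
      rw [enorm'_eq, enorm'_eq, map_sub, map_add] at this
      exact this
    have : ‖b - a‖ ≤ 2 * ‖ww‖ := by
      calc ‖b - a‖ = ‖ww - (a + ww - b)‖ := by congr 1; abel
        _ ≤ ‖ww‖ + ‖a + ww - b‖ := norm_sub_le _ _
        _ ≤ ‖ww‖ + ‖ww‖ := by linarith
        _ = 2 * ‖ww‖ := by ring
    rw [enorm'_eq, map_sub, enorm'_eq]
    exact this
  -- key bound
  have hkey := hc fhat hfhat xhat x0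
  have hrpow : snr ^ (-(1 / 2 : ℝ)) = (Real.sqrt snr)⁻¹ := by
    rw [Real.rpow_neg hspos.le, Real.sqrt_eq_rpow]
  have hb1 : enorm' (x0 - xhat) ≤ C * (2 * enorm' w) :=
    le_trans hkey (mul_le_mul (hCge fhat) htri (enorm'_nonneg _) hC0)
  have hb2 : C * (2 * enorm' w) = R * (Real.sqrt snr)⁻¹ := by
    rw [hw, hrpow, hRdef]; ring
  have hfinal : R * (Real.sqrt snr)⁻¹ < ε := by
    have h3 : R < Real.sqrt snr * ε := (div_lt_iff₀ hε).mp hsqrt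
    rw [← div_eq_mul_inv, div_lt_iff₀ hsqpos]
    linarith
  linarith
end
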